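/- If (G, I, O, λ) is an extended open graph admitting a Z-NF gflow, then the number of non-input non-output vertices u with Z ∉ λ(u) is at most |O| − |I|. -/
import Mathlib

open scoped symmDiff

inductive Pauli | X | Y | Z
deriving DecidableEq

inductive MPlane | XY | XZ | YZ
deriving DecidableEq

/-- The set of Pauli operators defining a measurement plane. -/
def MPlane.paulis : MPlane → Finset Pauli
  | .XY => {.X, .Y}
  | .XZ => {.X, .Z}
  | .YZ => {.Y, .Z}

variable {V : Type} [Fintype V] [DecidableEq V]

/-- Odd neighbourhood: vertices with an odd number of neighbours in `A`. -/
def oddNbhd (G : SimpleGraph V) [DecidableRel G.Adj] (A : Finset V) : Finset V :=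
  Finset.univ.filter fun w => Odd (A.filter (G.Adj w)).card

/-- `f` is extensive w.r.t. the strict order `r`. -/
def IsExtensive (O : Finset V) (r : V → V → Prop) (f : V → Finset V) : Prop :=
  ∀ u ∉ O, ∀ v ∈ f u, v ≠ u → r u v

/-- gflow of an extended open graph `(G, I, O, lam)`. -/
def IsGflow (G : SimpleGraph V) [DecidableRel G.Adj]
    (I O : Finset V) (lam : V → MPlane) (g : V → Finset V) : Prop :=
  (∀ u ∉ O, g u ⊆ Iᶜ) ∧
  (∃ r : V → V → Prop, IsStrictOrder V r ∧
    IsExtensive O r (fun u => g u ∪ oddNbhd G (g u))) ∧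
  ∀ u ∉ O,
    (lam u = .XY → u ∈ oddNbhd G (g u) ∧ u ∉ g u) ∧
    (lam u = .XZ → u ∈ g u ∧ u ∈ oddNbhd G (g u)) ∧
    (lam u = .YZ → u ∈ g u ∧ u ∉ oddNbhd G (g u))

/-- σ-normal forms for gflows. -/
def IsNF (σ : Pauli) (G : SimpleGraph V) [DecidableRel G.Adj]
    (O : Finset V) (g : V → Finset V) : Prop :=
  match σ with
  | .X => ∀ u ∉ O, oddNbhd G (g u) ⊆ insert u O
  | .Y => ∀ u ∉ O, (g u ∆ oddNbhd G (g u)) ⊆ insert u O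
  | .Z => ∀ u ∉ O, g u ⊆ insert u O

lemma natCast_zmod_two (n : ℕ) : ((n:ℕ) : ZMod 2) = if Odd n then 1 else 0 := by
  rcases Nat.even_or_odd n with ⟨k, hk⟩ | ⟨k, hk⟩
  · subst hk
    rw [if_neg (Nat.not_odd_iff_even.2 ⟨k, rfl⟩)]
    push_cast
    exact CharTwo.add_self_eq_zero _
  · subst hk
    rw [if_pos ⟨k, rfl⟩]
    push_cast
    rw [show ((2:ZMod 2)) = 0 by decide]
    ring

omit [Fintype V] in
lemma exists_ne_of_sum_zero {A : Finset V} {p : V → Prop} [DecidablePred p]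
    (h : ∑ u ∈ A, (if p u then (1:ZMod 2) else 0) = 0) {u0 : V} (hu0 : u0 ∈ A) (hp : p u0) :
    ∃ v ∈ A, v ≠ u0 ∧ p v := by
  by_contra hc
  push_neg at hc
  rw [Finset.sum_eq_single u0 (fun b hb hbne => if_neg (hc b hb hbne))
    (fun h' => absurd hu0 h'), if_pos hp] at h
  exact one_ne_zero h

/-- Core linear-independence-style lemma. -/
lemma core (G : SimpleGraph V) [DecidableRel G.Adj]
    (I O : Finset V) (lam : V → MPlane) (g : V → Finset V)
    (hg : IsGflow G I O lam g) (A : Finset V) (hA : ∀ u ∈ A, u ∉ O)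
    (hsum : ∀ v : V, ∑ u ∈ A, (if v ∈ g u then (1:ZMod 2) else 0) = 0) :
    A = ∅ := by
  obtain ⟨hI, ⟨r, hord, hext⟩, hplane⟩ := hg
  by_contra hne
  obtain ⟨u0, hu0⟩ := Finset.nonempty_of_ne_empty hne
  haveI := hord
  have hwf : WellFounded r := Finite.wellFounded_of_trans_of_irrefl r
  obtain ⟨u0, hu0A, hmin⟩ := hwf.has_min (↑A) ⟨u0, hu0⟩
  -- the odd-neighbourhood sums also vanish
  have hsumOdd : ∀ v : V,
      ∑ u ∈ A, (if v ∈ oddNbhd G (g u) then (1:ZMod 2) else 0) = 0 := by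
    intro v
    have step : ∀ u ∈ A, (if v ∈ oddNbhd G (g u) then (1:ZMod 2) else 0) =
        ∑ x : V, (if G.Adj v x then (1:ZMod 2) else 0) * (if x ∈ g u then 1 else 0) := by
      intro u _
      have h1 : (if v ∈ oddNbhd G (g u) then (1:ZMod 2) else 0) =
          ((((g u).filter (G.Adj v)).card : ℕ) : ZMod 2) := by
        rw [natCast_zmod_two]
        congr 1
        simp [oddNbhd]
      rw [h1, Finset.natCast_card_filter]
      rw [show (∑ a ∈ g u, if G.Adj v a then (1:ZMod 2) else 0) =
          ∑ a ∈ Finset.univ ∩ g u, if G.Adj v a then (1:ZMod 2) else 0 by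
        rw [Finset.univ_inter]]
      rw [← Finset.sum_ite_mem]
      refine Finset.sum_congr rfl fun x _ => ?_
      split_ifs <;> simp_all
    rw [Finset.sum_congr rfl step, Finset.sum_comm]
    exact Finset.sum_eq_zero fun x _ => by rw [← Finset.mul_sum, hsum x, mul_zero]
  -- find a contradiction with minimality
  have hu0O : u0 ∉ O := hA u0 hu0A
  have key : ∃ v ∈ A, v ≠ u0 ∧ u0 ∈ g v ∪ oddNbhd G (g v) := by
    have hp := hplane u0 hu0O
    rcases h : lam u0 with _ | _ | _
    · obtain ⟨ho, -⟩ := hp.1 h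
      obtain ⟨v, hv, hvne, hvm⟩ := exists_ne_of_sum_zero (hsumOdd u0) hu0A ho
      exact ⟨v, hv, hvne, Finset.mem_union_right _ hvm⟩
    · obtain ⟨hgm, -⟩ := hp.2.1 h
      obtain ⟨v, hv, hvne, hvm⟩ := exists_ne_of_sum_zero (hsum u0) hu0A hgm
      exact ⟨v, hv, hvne, Finset.mem_union_left _ hvm⟩
    · obtain ⟨hgm, -⟩ := hp.2.2 h
      obtain ⟨v, hv, hvne, hvm⟩ := exists_ne_of_sum_zero (hsum u0) hu0A hgm
      exact ⟨v, hv, hvne, Finset.mem_union_left _ hvm⟩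
  obtain ⟨v, hvA, hvne, hvm⟩ := key
  exact hmin v hvA (hext v (hA v hvA) u0 hvm (fun hh => hvne hh.symm))

/-- Existence of a gflow implies `|I| ≤ |O|`. -/
lemma gflow_card_le (G : SimpleGraph V) [DecidableRel G.Adj]
    (I O : Finset V) (lam : V → MPlane) (g : V → Finset V)
    (hg : IsGflow G I O lam g) : I.card ≤ O.card := by
  classical
  set Φ : ↥(Oᶜ.powerset) → (↥(Iᶜ : Finset V) → ZMod 2) :=
    fun A i => ∑ u ∈ A.1, (if (i : V) ∈ g u then 1 else 0) with hΦdef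
  have hInj : Function.Injective Φ := by
    intro A B hAB
    have hAsub : A.1 ⊆ Oᶜ := Finset.mem_powerset.1 A.2
    have hBsub : B.1 ⊆ Oᶜ := Finset.mem_powerset.1 B.2
    have hall : ∀ v : V, ∑ u ∈ A.1 ∆ B.1, (if v ∈ g u then (1:ZMod 2) else 0) = 0 := by
      intro v
      have hsplit : ∀ (C : Finset V),
          ∑ u ∈ C, (if v ∈ g u then (1:ZMod 2) else 0) =
          ∑ u ∈ C \ B.1, (if v ∈ g u then (1:ZMod 2) else 0) +
          ∑ u ∈ C ∩ B.1, (if v ∈ g u then (1:ZMod 2) else 0) := by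
        intro C
        rw [← Finset.sum_union (Finset.disjoint_sdiff_inter C B.1)]
        congr 1
        rw [Finset.sdiff_union_inter]
      have heq : ∑ u ∈ A.1, (if v ∈ g u then (1:ZMod 2) else 0) =
          ∑ u ∈ B.1, (if v ∈ g u then (1:ZMod 2) else 0) := by
        by_cases hv : v ∈ (Iᶜ : Finset V)
        · exact congrFun hAB ⟨v, hv⟩
        · have hz : ∀ (C : Finset V), C ⊆ Oᶜ →
              ∑ u ∈ C, (if v ∈ g u then (1:ZMod 2) else 0) = 0 := by
            intro C hC
            refine Finset.sum_eq_zero fun u hu => if_neg fun hvg => ?_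
            exact hv (hg.1 u (Finset.mem_compl.1 (hC hu)) hvg)
          rw [hz A.1 hAsub, hz B.1 hBsub]
        -- done
      have hsymm : A.1 ∆ B.1 = (A.1 \ B.1) ∪ (B.1 \ A.1) := rfl
      have e1 : ∑ u ∈ A.1, (if v ∈ g u then (1:ZMod 2) else 0) =
          ∑ u ∈ A.1 \ B.1, (if v ∈ g u then (1:ZMod 2) else 0) +
          ∑ u ∈ A.1 ∩ B.1, (if v ∈ g u then (1:ZMod 2) else 0) := by
        rw [← Finset.sum_union (Finset.disjoint_sdiff_inter A.1 B.1),
          Finset.sdiff_union_inter]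
      have e2 : ∑ u ∈ B.1, (if v ∈ g u then (1:ZMod 2) else 0) =
          ∑ u ∈ B.1 \ A.1, (if v ∈ g u then (1:ZMod 2) else 0) +
          ∑ u ∈ A.1 ∩ B.1, (if v ∈ g u then (1:ZMod 2) else 0) := by
        rw [Finset.inter_comm, ← Finset.sum_union (Finset.disjoint_sdiff_inter B.1 A.1),
          Finset.sdiff_union_inter]
      have e3 : ∑ u ∈ A.1 \ B.1, (if v ∈ g u then (1:ZMod 2) else 0) =
          ∑ u ∈ B.1 \ A.1, (if v ∈ g u then (1:ZMod 2) else 0) := by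
        have h' := heq
        rw [e1, e2] at h'
        exact add_right_cancel h'
      rw [hsymm, Finset.sum_union disjoint_sdiff_sdiff, e3]
      exact CharTwo.add_self_eq_zero _
    have hempty := core G I O lam g hg (A.1 ∆ B.1)
      (fun u hu => by
        have : u ∈ Oᶜ := by
          rcases Finset.mem_union.1 hu with h | h
          · exact hAsub (Finset.mem_sdiff.1 h).1
          · exact hBsub (Finset.mem_sdiff.1 h).1
        exact Finset.mem_compl.1 this) hall
    exact Subtype.ext (symmDiff_eq_bot.1 hempty)
  have hcard := Fintype.card_le_of_injective Φ hInj
  rw [Fintype.card_coe, Finset.card_powerset] at hcard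
  have hfun : Fintype.card (↥(Iᶜ : Finset V) → ZMod 2) = 2 ^ (Iᶜ : Finset V).card := by
    rw [Fintype.card_fun, ZMod.card, Fintype.card_coe]
  rw [hfun] at hcard
  have hle : (Oᶜ : Finset V).card ≤ (Iᶜ : Finset V).card :=
    (Nat.pow_le_pow_iff_right one_lt_two).1 hcard
  have h1 : (Oᶜ : Finset V).card = Fintype.card V - O.card := Finset.card_compl O
  have h2 : (Iᶜ : Finset V).card = Fintype.card V - I.card := Finset.card_compl I
  have h3 : O.card ≤ Fintype.card V := Finset.card_le_univ O
  have h4 : I.card ≤ Fintype.card V := Finset.card_le_univ I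
  omega

/-- If an extended open graph admits a Z-NF gflow, then the number of non-input
non-output vertices whose measurement plane does not contain Z is at most |O| - |I|. -/
theorem ZNF_plane_bound (G : SimpleGraph V) [DecidableRel G.Adj]
    (I O : Finset V) (lam : V → MPlane) (g : V → Finset V)
    (hg : IsGflow G I O lam g) (hNF : IsNF .Z G O g) :
    ((Iᶜ ∩ Oᶜ).filter fun u => Pauli.Z ∉ (lam u).paulis).card ≤ O.card - I.card := by
  classical
  set S := ((Iᶜ ∩ Oᶜ).filter fun u => Pauli.Z ∉ (lam u).paulis) with hS
  have hSXY : ∀ u ∈ S, lam u = MPlane.XY := by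
    intro u hu
    have := (Finset.mem_filter.1 hu).2
    rcases h : lam u with _ | _ | _
    · rfl
    · rw [h] at this; exact absurd (by decide : Pauli.Z ∈ MPlane.paulis MPlane.XZ) this
    · rw [h] at this; exact absurd (by decide : Pauli.Z ∈ MPlane.paulis MPlane.YZ) this
  have hSIc : ∀ u ∈ S, u ∉ I := fun u hu =>
    Finset.mem_compl.1 (Finset.mem_inter.1 (Finset.mem_filter.1 hu).1).1
  have hSOc : ∀ u ∈ S, u ∉ O := fun u hu =>
    Finset.mem_compl.1 (Finset.mem_inter.1 (Finset.mem_filter.1 hu).1).2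
  obtain ⟨hI, hrext, hplane⟩ := hg
  have hg' : IsGflow G (I ∪ S) O lam g := by
    refine ⟨?_, hrext, hplane⟩
    intro u hu v hv
    rw [Finset.mem_compl, Finset.mem_union]
    push_neg
    refine ⟨Finset.mem_compl.1 (hI u hu hv), fun hvS => ?_⟩
    have := hNF u hu hv
    rcases Finset.mem_insert.1 this with h | h
    · exact ((hplane u hu).1 (hSXY u (h ▸ hvS))).2 (h ▸ hv)
    · exact hSOc v hvS h
  have hle := gflow_card_le G (I ∪ S) O lam g hg'
  have hdisj : Disjoint I S :=
    Finset.disjoint_left.2 fun a haI haS => hSIc a haS haI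
  rw [Finset.card_union_of_disjoint hdisj] at hle
  omega
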